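/- arXiv:1109.5988 — 5 statements merged into one kernel-verified Lean document; each statement's English description precedes it below -/
import Mathlib

section
/- If N is a product of primes each congruent to 1 mod 4, then there exist coprime integers a, b with a² + b² = N. -/
/-!
Induct on the prime factorisation. For a prime `p ≡ 1 mod 4` Fermat gives `p = c² + d²`, and if
`M = a² + b²` with `a, b` coprime then `p M` is the norm of both `(a + bi)(c + di)` and
`(a + bi)(c - di)`. A prime dividing both coordinates of either product divides `p`, so it would
be `p` itself; if that happened for both products, then `p` (being odd) would divide `ac`, `bc`,
`ad`, `bd`, hence `c` and `d`, and so `p² ∣ c² + d² = p`.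
-/

section CommRing

variable {R : Type*} [CommRing R]

theorem IsCoprime.dvd_of_dvd_mul_of_dvd_mul {a b c k : R} (hab : IsCoprime a b)
    (ha : k ∣ a * c) (hb : k ∣ b * c) : k ∣ c := by
  obtain ⟨u, v, huv⟩ := hab
  have hc : c = u * (a * c) + v * (b * c) := by linear_combination (-c) * huv
  rw [hc]
  exact dvd_add (dvd_mul_of_dvd_right ha u) (dvd_mul_of_dvd_right hb v)

theorem IsCoprime.dvd_sq_add_sq_of_dvd_mul_sub_of_dvd_mul_add {a b c d k : R}
    (hab : IsCoprime a b) (hs : k ∣ a * c - b * d) (ht : k ∣ a * d + b * c) :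
    k ∣ c ^ 2 + d ^ 2 := by
  refine hab.dvd_of_dvd_mul_of_dvd_mul ?_ ?_
  · have : a * (c ^ 2 + d ^ 2) = c * (a * c - b * d) + d * (a * d + b * c) := by ring
    rw [this]
    exact dvd_add (dvd_mul_of_dvd_right hs c) (dvd_mul_of_dvd_right ht d)
  · have : b * (c ^ 2 + d ^ 2) = c * (a * d + b * c) - d * (a * c - b * d) := by ring
    rw [this]
    exact dvd_sub (dvd_mul_of_dvd_right ht c) (dvd_mul_of_dvd_right hs d)

theorem Prime.not_dvd_both_compositions [IsDomain R] {a b c d p : R} (hp : Prime p)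
    (hp2 : ¬p ∣ 2) (hab : IsCoprime a b) (hcd : c ^ 2 + d ^ 2 = p) :
    ¬((p ∣ a * c - b * d ∧ p ∣ a * d + b * c) ∧ (p ∣ a * c + b * d ∧ p ∣ a * -d + b * c)) := by
  rintro ⟨⟨hs, ht⟩, hs', ht'⟩
  have half {x : R} (h : p ∣ 2 * x) : p ∣ x := (hp.dvd_or_dvd h).resolve_left hp2
  have hac : p ∣ a * c := half <| by
    rw [show 2 * (a * c) = (a * c - b * d) + (a * c + b * d) by ring]; exact dvd_add hs hs'
  have hbd : p ∣ b * d := half <| by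
    rw [show 2 * (b * d) = (a * c + b * d) - (a * c - b * d) by ring]; exact dvd_sub hs' hs
  have had : p ∣ a * d := half <| by
    rw [show 2 * (a * d) = (a * d + b * c) - (a * -d + b * c) by ring]; exact dvd_sub ht ht'
  have hbc : p ∣ b * c := half <| by
    rw [show 2 * (b * c) = (a * d + b * c) + (a * -d + b * c) by ring]; exact dvd_add ht ht'
  have hpc : p ∣ c := hab.dvd_of_dvd_mul_of_dvd_mul hac hbc
  have hpd : p ∣ d := hab.dvd_of_dvd_mul_of_dvd_mul had hbd
  have hpp : p ^ 2 ∣ c ^ 2 + d ^ 2 := dvd_add (pow_dvd_pow_of_dvd hpc 2) (pow_dvd_pow_of_dvd hpd 2)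
  rw [hcd, sq] at hpp
  exact hp.not_isUnit (isUnit_of_dvd_one ((mul_dvd_mul_iff_left hp.ne_zero).mp (by rwa [mul_one])))

end CommRing

section PrincipalIdealDomain

variable {R : Type*} [CommRing R] [IsDomain R] [IsPrincipalIdealRing R]

theorem Prime.dvd_of_not_isCoprime_mul_sub_mul_add {a b c d p : R} (hp : Prime p)
    (hab : IsCoprime a b) (hcd : c ^ 2 + d ^ 2 = p)
    (hst : ¬IsCoprime (a * c - b * d) (a * d + b * c)) :
    p ∣ a * c - b * d ∧ p ∣ a * d + b * c := by
  have hnonzero : ¬(a * c - b * d = 0 ∧ a * d + b * c = 0) := by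
    rintro ⟨hs, ht⟩
    have hzero : a * p = 0 ∧ b * p = 0 := by
      rw [← hcd]
      exact ⟨by linear_combination c * hs + d * ht, by linear_combination c * ht - d * hs⟩
    exact hab.ne_zero_or_ne_zero.elim
      (· (mul_eq_zero.mp hzero.1 |>.resolve_right hp.ne_zero))
      (· (mul_eq_zero.mp hzero.2 |>.resolve_right hp.ne_zero))
  by_contra hndvd
  refine hst (isCoprime_of_prime_dvd hnonzero fun z hz hzs hzt => hndvd ?_)
  have hzp : Associated z p :=
    hz.associated_of_dvd hp (hcd ▸ hab.dvd_sq_add_sq_of_dvd_mul_sub_of_dvd_mul_add hzs hzt)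
  exact ⟨hzp.dvd_iff_dvd_left.mp hzs, hzp.dvd_iff_dvd_left.mp hzt⟩

theorem IsCoprime.exists_isCoprime_sq_add_sq_eq_mul {a b c d p : R} (hab : IsCoprime a b)
    (hp : Prime p) (hp2 : ¬p ∣ 2) (hcd : c ^ 2 + d ^ 2 = p) :
    ∃ x y : R, IsCoprime x y ∧ x ^ 2 + y ^ 2 = (a ^ 2 + b ^ 2) * p := by
  rw [← hcd]
  by_cases hst : IsCoprime (a * c - b * d) (a * d + b * c)
  · exact ⟨_, _, hst, by ring⟩
  by_cases hst' : IsCoprime (a * c - b * -d) (a * -d + b * c)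
  · exact ⟨_, _, hst', by ring⟩
  obtain ⟨hs, ht⟩ := hp.dvd_of_not_isCoprime_mul_sub_mul_add hab hcd hst
  obtain ⟨hs', ht'⟩ := hp.dvd_of_not_isCoprime_mul_sub_mul_add hab (by rw [neg_sq]; exact hcd) hst'
  rw [mul_neg, sub_neg_eq_add] at hs'
  exact absurd ⟨⟨hs, ht⟩, hs', ht'⟩ (hp.not_dvd_both_compositions hp2 hab hcd)

end PrincipalIdealDomain

theorem stmt_1_general (N : ℕ)
    (h : ∀ p : ℕ, p.Prime → p ∣ N → p % 4 = 1) :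
    ∃ a b : ℤ, IsCoprime a b ∧ a ^ 2 + b ^ 2 = (N : ℤ) := by
  induction N using induction_on_primes with
  | zero => exact absurd (h 2 Nat.prime_two (dvd_zero 2)) (by norm_num)
  | one => exact ⟨1, 0, isCoprime_one_left, by norm_num⟩
  | prime_mul p M hp ih =>
    have hp4 : p % 4 = 1 := h p hp (dvd_mul_right p M)
    obtain ⟨a, b, hab, habM⟩ := ih fun q hq hqM => h q hq (dvd_mul_of_dvd_right hqM p)
    have : Fact p.Prime := ⟨hp⟩
    obtain ⟨c, d, hcd⟩ := Nat.Prime.sq_add_sq (p := p) (by omega)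
    have hp2 : ¬(p : ℤ) ∣ 2 := by
      rw [Int.natCast_dvd_ofNat]
      intro hdvd
      have := Nat.le_of_dvd two_pos hdvd
      have := hp.two_le
      omega
    have hcdZ : (c : ℤ) ^ 2 + (d : ℤ) ^ 2 = p := by exact_mod_cast hcd
    obtain ⟨x, y, hxy, hsum⟩ :=
      hab.exists_isCoprime_sq_add_sq_eq_mul (Nat.prime_iff_prime_int.mp hp) hp2 hcdZ
    exact ⟨x, y, hxy, by rw [hsum, habM]; push_cast; ring⟩

/-- If `N` is a product of primes each `≡ 1 mod 4`, then `N` is primitively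
represented as a sum of two squares. -/
theorem stmt_1 (N : ℕ) (hN : 0 < N)
    (h : ∀ p : ℕ, p.Prime → p ∣ N → p % 4 = 1) :
    ∃ a b : ℤ, IsCoprime a b ∧ a ^ 2 + b ^ 2 = (N : ℤ) :=
  stmt_1_general N h
end

section
/- A positive integer N satisfies: there exist coprime integers a, b with 2a² + ab + 4b² = 2N (equivalently -2N is primitively represented by the quadratic form with Gram matrix [[-2,-1],[-1,-4]]) if and only if N is a product of primes p with p ≡ 1, 2, or 4 mod 7, or 7 times such a product. -/
/-!
Let `𝒦 = ℤ[ω]` with `ω² = ω - 2` be the ring of integers of `ℚ(√-7)`: its norm form is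
`a² + ab + 2b²`, and it is norm-Euclidean. By quadratic reciprocity `(-7/p) = (p/7)` for odd
primes `p`, so `-7` is a square mod `p ≠ 2, 7` exactly when `p ≡ 1, 2, 4 mod 7`.

If `a² + ab + 2b² = N` with `a, b` coprime, then `4N = (2a + b)² + 7b²` forces `-7` to be a square
modulo every odd prime `p ≠ 7` dividing `N`, and rules out `49 ∣ N`. Conversely, every prime
`p ≡ 1, 2, 4 mod 7` is the norm of a prime `π` not dividing `π̄`. Building `z` with `N(z) = N` one
prime at a time and multiplying by whichever of `π`, `π̄` does not divide `z̄` keeps `z` coprime to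
`z̄`; then no rational prime divides `z = a + bω`, nor `√-7 · z`, whose norm is `7N`.
-/

open QuadraticAlgebra

local notation "𝒦" => QuadraticAlgebra ℤ (-2) 1

theorem Int.exists_abs_two_mul_sub_mul_le (a : ℤ) {m : ℤ} (hm : 0 < m) :
    ∃ q, |2 * (a - m * q)| ≤ m := by
  have h₀ := Int.emod_nonneg (2 * a + m) (by omega : 2 * m ≠ 0)
  have h₁ := Int.emod_lt_of_pos (2 * a + m) (by omega : 0 < 2 * m)
  have h₂ := Int.mul_ediv_add_emod (2 * a + m) (2 * m)
  exact ⟨(2 * a + m) / (2 * m), abs_le.mpr ⟨by linarith, by linarith⟩⟩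

theorem star_dvd_star_iff {R : Type*} [CommSemiring R] [StarRing R] {x y : R} :
    star x ∣ star y ↔ x ∣ y :=
  ⟨fun h => by simpa only [starRingEnd_apply, star_star] using map_dvd (starRingEnd R) h,
    map_dvd (starRingEnd R)⟩

instance {R : Type*} [CommRing R] {a b : R} :
    IsLocalHom (QuadraticAlgebra.norm : QuadraticAlgebra R a b →* R) :=
  ⟨fun _ => isUnit_iff_norm_isUnit.mpr⟩

instance Nat.fact_prime_seven : Fact (Nat.Prime 7) := ⟨by norm_num⟩

theorem Int.prime_seven : Prime (7 : ℤ) :=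
  Int.prime_iff_natAbs_prime.mpr (by norm_num)

theorem legendreSym_neg_seven {p : ℕ} [Fact p.Prime] (hp : p ≠ 2) :
    legendreSym p (-7) = legendreSym 7 p := by
  have hodd : p % 2 = 1 := Nat.odd_iff.mp ((Fact.out : p.Prime).odd_of_ne_two hp)
  have hqr := legendreSym.quadratic_reciprocity' (by norm_num : 7 ≠ 2) hp
  push_cast at hqr
  rw [legendreSym.at_neg hp, ZMod.χ₄_eq_neg_one_pow hodd, hqr, ← mul_assoc, ← pow_add,
    show p / 2 + 3 * (p / 2) = 2 * (2 * (p / 2)) by ring, pow_mul, neg_one_sq, one_pow, one_mul]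

theorem isSquare_natCast_zmod_seven_iff {n : ℕ} (hn : n % 7 ≠ 0) :
    IsSquare (n : ZMod 7) ↔ n % 7 = 1 ∨ n % 7 = 2 ∨ n % 7 = 4 := by
  rw [← ZMod.natCast_mod]
  have : n % 7 < 7 := Nat.mod_lt _ (by norm_num)
  interval_cases n % 7 <;> simp_all <;> decide

theorem isSquare_neg_seven_iff {p : ℕ} [Fact p.Prime] (hp2 : p ≠ 2) (hp7 : p ≠ 7) :
    IsSquare ((-7 : ℤ) : ZMod p) ↔ p % 7 = 1 ∨ p % 7 = 2 ∨ p % 7 = 4 := by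
  have h7p : ¬7 ∣ p := fun h =>
    hp7 ((Nat.prime_dvd_prime_iff_eq (by norm_num) Fact.out).mp h).symm
  have hp7' : ¬(p : ℤ) ∣ 7 := fun h =>
    hp7 ((Nat.prime_dvd_prime_iff_eq Fact.out (by norm_num)).mp (mod_cast h))
  rw [← legendreSym.eq_one_iff p, legendreSym_neg_seven hp2, legendreSym.eq_one_iff' 7,
    isSquare_natCast_zmod_seven_iff (mt Nat.dvd_of_mod_eq_zero h7p)]
  · rwa [Ne, ZMod.natCast_eq_zero_iff]
  · rwa [Ne, ZMod.intCast_zmod_eq_zero_iff_dvd, dvd_neg]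

theorem mod_seven_of_prime_dvd {a b : ℤ} (hab : IsCoprime a b) {p : ℕ} (hp : p.Prime)
    (hp7 : p ≠ 7) (hdvd : (p : ℤ) ∣ a ^ 2 + a * b + 2 * b ^ 2) :
    p % 7 = 1 ∨ p % 7 = 2 ∨ p % 7 = 4 := by
  rcases eq_or_ne p 2 with rfl | hp2
  · norm_num
  have : Fact p.Prime := ⟨hp⟩
  have hpZ : Prime (p : ℤ) := Nat.prime_iff_prime_int.mp hp
  by_contra h
  have hleg : legendreSym p (-7) = -1 :=
    (legendreSym.eq_neg_one_iff p).mpr ((isSquare_neg_seven_iff hp2 hp7).not.mpr h)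
  obtain ⟨h₁, h₂⟩ := legendreSym.prime_dvd_of_eq_neg_one hleg (x := 2 * a + b) (y := b)
    ((dvd_mul_of_dvd_right hdvd 4).trans (dvd_of_eq (by ring)))
  have h₃ : (p : ℤ) ∣ 2 * a := (dvd_sub h₁ h₂).trans (dvd_of_eq (by ring))
  have h₄ : (p : ℤ) ∣ a := (hpZ.dvd_or_dvd h₃).resolve_left fun h =>
    hp2 ((Nat.prime_dvd_prime_iff_eq hp Nat.prime_two).mp (mod_cast h))
  exact hpZ.not_isUnit (hab.isUnit_of_dvd' h₄ h₂)

theorem not_forty_nine_dvd {a b : ℤ} (hab : IsCoprime a b) :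
    ¬(49 : ℤ) ∣ a ^ 2 + a * b + 2 * b ^ 2 := by
  intro h
  have h49 : (49 : ℤ) ∣ (2 * a + b) ^ 2 + 7 * b ^ 2 :=
    (dvd_mul_of_dvd_right h 4).trans (dvd_of_eq (by ring))
  obtain ⟨k, hk⟩ : (7 : ℤ) ∣ 2 * a + b :=
    Int.prime_seven.dvd_of_dvd_pow (n := 2)
      ((dvd_sub (dvd_trans (by norm_num) h49) (dvd_mul_right 7 (b ^ 2))).trans
        (dvd_of_eq (by ring)))
  have hb : (7 : ℤ) ∣ b := Int.prime_seven.dvd_of_dvd_pow (n := 2) (by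
    rw [hk] at h49
    obtain ⟨m, hm⟩ := h49
    exact ⟨m - k ^ 2, mul_left_cancel₀ (by norm_num : (7 : ℤ) ≠ 0)
      (by linear_combination hm)⟩)
  have ha : (7 : ℤ) ∣ a := by
    obtain ⟨l, hl⟩ := hb
    omega
  exact Int.prime_seven.not_isUnit (hab.isUnit_of_dvd' ha hb)

namespace Kleinian

theorem norm_eq (z : 𝒦) : z.norm = z.re ^ 2 + z.re * z.im + 2 * z.im ^ 2 := by
  rw [norm_def]; ring

theorem four_mul_norm (z : 𝒦) : 4 * z.norm = (2 * z.re + z.im) ^ 2 + 7 * z.im ^ 2 := by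
  rw [norm_eq]; ring

theorem norm_nonneg (z : 𝒦) : 0 ≤ z.norm := by
  nlinarith [four_mul_norm z, sq_nonneg (2 * z.re + z.im), sq_nonneg z.im]

theorem norm_pos {z : 𝒦} (hz : z ≠ 0) : 0 < z.norm := by
  refine (norm_nonneg z).lt_of_ne' fun h => hz ?_
  have him : z.im = 0 := by
    nlinarith [four_mul_norm z, sq_nonneg (2 * z.re + z.im), sq_nonneg z.im]
  have hre : z.re = 0 := by simpa [norm_eq, him] using h
  ext <;> assumption

theorem isUnit_iff_norm_eq_one {z : 𝒦} : IsUnit z ↔ z.norm = 1 := by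
  rw [isUnit_iff_norm_isUnit, Int.isUnit_iff]
  have := norm_nonneg z
  omega

theorem intCast_dvd_iff {n : ℤ} {z : 𝒦} : (n : 𝒦) ∣ z ↔ n ∣ z.re ∧ n ∣ z.im := by
  simpa using algebraMap_dvd_iff (a := (-2 : ℤ)) (b := 1) (r := n) (z := z)

-- `2ω - 1`, whose square is `-7`
def sqrtNegSeven : 𝒦 := ⟨-1, 2⟩

theorem norm_sqrtNegSeven : sqrtNegSeven.norm = 7 := by
  simp [norm_eq, sqrtNegSeven]

theorem star_sqrtNegSeven : star sqrtNegSeven = -sqrtNegSeven := by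
  ext <;> simp [sqrtNegSeven]

theorem sub_star_eq_im_mul (z : 𝒦) : z - star z = z.im * sqrtNegSeven := by
  ext <;> simp [sqrtNegSeven]; ring

/- With `x * star y = ⟨e, f⟩`, rounding `f` and then `2e + t` to multiples of `N(y)` and `2N(y)`
leaves `(x - q * y) * star y = ⟨s, t⟩` with `|2t|, |2s + t| ≤ N(y)`, hence
`16 N(⟨s, t⟩) = 4(2s + t)² + 7(2t)² ≤ 11 N(y)²`. -/
theorem exists_norm_sub_mul_lt (x : 𝒦) {y : 𝒦} (hy : y ≠ 0) :
    ∃ q, (x - q * y).norm < y.norm := by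
  set n := y.norm
  have hn : 0 < n := norm_pos hy
  obtain ⟨d, hd⟩ := Int.exists_abs_two_mul_sub_mul_le (x * star y).im hn
  set t := (x * star y).im - n * d
  obtain ⟨c, hc⟩ :=
    Int.exists_abs_two_mul_sub_mul_le (2 * (x * star y).re + t) (by positivity : 0 < 2 * n)
  set s := (x * star y).re - n * c
  have hrem : (x - ⟨c, d⟩ * y) * star y = ⟨s, t⟩ := by
    rw [sub_mul, mul_assoc, ← algebraMap_norm_eq_mul_star]
    ext <;> simp [s, t, n, mul_comm]
  have ht : (2 * t) ^ 2 ≤ n ^ 2 := sq_le_sq' (abs_le.mp hd).1 (abs_le.mp hd).2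
  have hs : (2 * s + t) ^ 2 ≤ n ^ 2 := by
    have hc' := abs_le.mp hc
    exact sq_le_sq' (by linarith [hc'.1]) (by linarith [hc'.2])
  have key : (x - ⟨c, d⟩ * y).norm * n < n * n := by
    have hnorm : (x - ⟨c, d⟩ * y).norm * n = (⟨s, t⟩ : 𝒦).norm := by
      rw [← hrem, map_mul, QuadraticAlgebra.norm_star]
    nlinarith [four_mul_norm ⟨s, t⟩]
  exact ⟨_, lt_of_mul_lt_mul_right key hn.le⟩

noncomputable instance : EuclideanDomain 𝒦 :=
  { (inferInstance : CommRing 𝒦), (inferInstance : Nontrivial 𝒦) with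
    quotient := fun x y => if hy : y = 0 then 0 else (exists_norm_sub_mul_lt x hy).choose
    quotient_zero := fun _ => dif_pos rfl
    remainder := fun x y =>
      x - (if hy : y = 0 then 0 else (exists_norm_sub_mul_lt x hy).choose) * y
    quotient_mul_add_remainder_eq := fun _ _ => by ring
    r := fun x y => x.norm.natAbs < y.norm.natAbs
    r_wellFounded := (measure fun z : 𝒦 => z.norm.natAbs).wf
    remainder_lt := fun x y hy => by
      simp only [dif_neg hy]
      exact Int.natAbs_lt_natAbs_of_nonneg_of_lt (norm_nonneg _)
        (exists_norm_sub_mul_lt x hy).choose_spec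
    mul_left_not_lt := fun x y hy => by
      rw [not_lt, map_mul, Int.natAbs_mul]
      exact Nat.le_mul_of_pos_right _ (Int.natAbs_pos.mpr (norm_pos hy).ne') }

theorem prime_of_prime_norm {π : 𝒦} (h : Prime π.norm) : Prime π :=
  (h.irreducible.of_map (f := QuadraticAlgebra.norm)).prime

theorem not_prime_intCast_of_dvd_norm {n : ℤ} {w : 𝒦} (hn : n ∣ w.norm)
    (hw : ¬(n : 𝒦) ∣ w) : ¬Prime (n : 𝒦) := by
  intro hp
  have : (n : 𝒦) ∣ w * star w := by
    rw [← algebraMap_norm_eq_mul_star, algebraMap_int_eq, eq_intCast]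
    exact Int.cast_dvd_cast _ _ hn
  rcases hp.dvd_or_dvd this with h | h
  · exact hw h
  · exact hw (by simpa using star_dvd_star_iff.mpr h)

-- `p` divides the norm `m² + m + 2` of `m + ω` but not `m + ω` itself, so `p` is not prime in the
-- Euclidean ring `𝒦` and factors into two non-units, each of norm `p`.
theorem exists_norm_eq_prime_of_dvd {p : ℕ} (hp : p.Prime) {m : ℤ}
    (hm : (p : ℤ) ∣ m ^ 2 + m + 2) : ∃ π : 𝒦, π.norm = p := by
  have hnp : ¬Irreducible (p : 𝒦) := by
    have hw : ¬((p : ℤ) : 𝒦) ∣ ⟨m, 1⟩ := fun h =>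
      hp.ne_one <| Nat.dvd_one.mp <| Int.natCast_dvd_natCast.mp <| by
        simpa using (intCast_dvd_iff.mp h).2
    have := not_prime_intCast_of_dvd_norm (by simpa [norm_eq] using hm) hw
    exact fun hirr => this (by simpa using hirr.prime)
  have hu : ¬IsUnit (p : 𝒦) := by
    rw [isUnit_iff_norm_eq_one, QuadraticAlgebra.norm_natCast]
    have := hp.one_lt
    nlinarith
  obtain ⟨x, y, hxy, hx, hy⟩ : ∃ x y : 𝒦, (p : 𝒦) = x * y ∧ ¬IsUnit x ∧ ¬IsUnit y := by
    simpa [irreducible_iff, hu] using hnp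
  obtain ⟨nx, hnx⟩ := Int.eq_ofNat_of_zero_le (norm_nonneg x)
  obtain ⟨ny, hny⟩ := Int.eq_ofNat_of_zero_le (norm_nonneg y)
  rw [isUnit_iff_norm_eq_one, hnx] at hx
  rw [isUnit_iff_norm_eq_one, hny] at hy
  have : nx * ny = p ^ 2 := by
    have := congrArg QuadraticAlgebra.norm hxy
    rw [map_mul, QuadraticAlgebra.norm_natCast, hnx, hny] at this
    exact_mod_cast this.symm
  refine ⟨x, ?_⟩
  rw [hnx, ((hp.mul_eq_prime_sq_iff (mod_cast hx) (mod_cast hy)).mp this).1]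

theorem exists_dvd_sq_add_add_two {p : ℕ} (hp : p.Prime)
    (h : p % 7 = 1 ∨ p % 7 = 2 ∨ p % 7 = 4) :
    ∃ m : ℤ, (p : ℤ) ∣ m ^ 2 + m + 2 := by
  rcases eq_or_ne p 2 with rfl | hp2
  · exact ⟨0, by norm_num⟩
  have : Fact p.Prime := ⟨hp⟩
  obtain ⟨r, hr⟩ := (isSquare_neg_seven_iff hp2 (by rintro rfl; norm_num at h)).mpr h
  have h2 : (2 : ZMod p) ≠ 0 := Ring.two_ne_zero (by simpa [ZMod.ringChar_zmod_n] using hp2)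
  obtain ⟨m, hm⟩ := ZMod.intCast_surjective ((r - 1) / 2)
  refine ⟨m, (ZMod.intCast_zmod_eq_zero_iff_dvd _ p).mp ?_⟩
  push_cast at hr ⊢
  rw [hm]
  field_simp
  linear_combination -hr

theorem exists_norm_eq_prime {p : ℕ} (hp : p.Prime) (h : p % 7 = 1 ∨ p % 7 = 2 ∨ p % 7 = 4) :
    ∃ π : 𝒦, π.norm = p :=
  let ⟨_, hm⟩ := exists_dvd_sq_add_add_two hp h
  exists_norm_eq_prime_of_dvd hp hm

theorem not_dvd_star_self {π : 𝒦} {p : ℕ} (hp : p.Prime) (hπ : π.norm = p) (hp7 : p ≠ 7) :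
    ¬π ∣ star π := by
  have hpZ : Prime (p : ℤ) := Nat.prime_iff_prime_int.mp hp
  intro h
  have : π ∣ π.im * sqrtNegSeven := sub_star_eq_im_mul π ▸ dvd_sub dvd_rfl h
  rcases (prime_of_prime_norm (hπ ▸ hpZ)).dvd_or_dvd this with him | h7
  · have hpim : (p : ℤ) ∣ π.im := hpZ.dvd_of_dvd_pow (n := 2) <| by
      simpa [hπ] using map_dvd QuadraticAlgebra.norm him
    have hpre : (p : ℤ) ∣ π.re := hpZ.dvd_of_dvd_pow (n := 2) <| by
      have hre : π.re ^ 2 = π.norm - π.im * (π.re + 2 * π.im) := by rw [norm_eq]; ring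
      rw [hre, hπ]
      exact dvd_sub dvd_rfl (dvd_mul_of_dvd_left hpim _)
    have := map_dvd QuadraticAlgebra.norm (intCast_dvd_iff.mpr ⟨hpre, hpim⟩)
    rw [norm_intCast, hπ, sq] at this
    exact hpZ.not_isUnit <| isUnit_of_dvd_one <|
      (mul_dvd_mul_iff_left hpZ.ne_zero).mp (by simpa using this)
  · have := map_dvd QuadraticAlgebra.norm h7
    rw [hπ, norm_sqrtNegSeven] at this
    exact hp7 ((Nat.prime_dvd_prime_iff_eq hp (by norm_num)).mp (mod_cast this))

theorem isCoprime_mul_star {z π : 𝒦} (hz : IsCoprime z (star z)) (hπ : Prime π.norm)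
    (hπs : ¬π ∣ star π) (hπz : ¬π ∣ star z) : IsCoprime (π * z) (star (π * z)) := by
  have hcop {ρ x : 𝒦} (hρ : Prime ρ.norm) (h : ¬ρ ∣ x) : IsCoprime ρ x :=
    (prime_of_prime_norm hρ).irreducible.coprime_iff_not_dvd.mpr h
  have hzπ : IsCoprime z (star π) :=
    (hcop (by rwa [QuadraticAlgebra.norm_star]) fun h =>
      hπz (by simpa using star_dvd_star_iff.mpr h)).symm
  rw [star_mul']
  exact ((hcop hπ hπs).mul_right (hcop hπ hπz)).mul_left (hzπ.mul_right hz)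

theorem exists_norm_eq_mul_isCoprime_star {z π : 𝒦} (hz : IsCoprime z (star z))
    (hπ : Prime π.norm) (hπs : ¬π ∣ star π) :
    ∃ w : 𝒦, w.norm = π.norm * z.norm ∧ IsCoprime w (star w) := by
  by_cases hπz : π ∣ star z
  · refine ⟨star π * z, by rw [map_mul, QuadraticAlgebra.norm_star], isCoprime_mul_star hz
      (by rwa [QuadraticAlgebra.norm_star]) (fun h => hπs ?_) (fun h => ?_)⟩
    · simpa using star_dvd_star_iff.mpr h
    · exact (prime_of_prime_norm hπ).not_isUnit
        (hz.isUnit_of_dvd' (by simpa using star_dvd_star_iff.mpr h) hπz)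
  · exact ⟨π * z, map_mul _ _ _, isCoprime_mul_star hz hπ hπs hπz⟩

theorem exists_norm_eq_isCoprime_star {N : ℕ} (hN : N ≠ 0)
    (h : ∀ p : ℕ, p.Prime → p ∣ N → p % 7 = 1 ∨ p % 7 = 2 ∨ p % 7 = 4) :
    ∃ z : 𝒦, z.norm = N ∧ IsCoprime z (star z) := by
  induction N using UniqueFactorizationMonoid.induction_on_prime with
  | h₁ => exact absurd rfl hN
  | h₂ x hx => exact ⟨1, by simp [Nat.isUnit_iff.mp hx], by simpa using isCoprime_one_left⟩
  | h₃ a p ha hp ih =>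
    rw [← Nat.prime_iff] at hp
    obtain ⟨z, hz, hzc⟩ := ih ha fun q hq hqa => h q hq (dvd_mul_of_dvd_right hqa p)
    have hp7 := h p hp (dvd_mul_right p a)
    obtain ⟨π, hπ⟩ := exists_norm_eq_prime hp hp7
    obtain ⟨w, hw, hwc⟩ := exists_norm_eq_mul_isCoprime_star hzc
      (hπ ▸ Nat.prime_iff_prime_int.mp hp) (not_dvd_star_self hp hπ (by rintro rfl; simp at hp7))
    exact ⟨w, by rw [hw, hπ, hz]; push_cast; ring, hwc⟩

theorem isCoprime_re_im_mul {z d : 𝒦} (hz : IsCoprime z (star z)) (hd : star d ∣ d)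
    (hsq : Squarefree d.norm) : IsCoprime (d * z).re (d * z).im := by
  have hd0 : d ≠ 0 := by rintro rfl; simp at hsq
  have hz0 : z ≠ 0 := by rintro rfl; exact not_isCoprime_zero_zero (by simpa using hz)
  refine isCoprime_of_prime_dvd (fun h => mul_ne_zero hd0 hz0 (QuadraticAlgebra.ext h.1 h.2))
    fun q hq hre him => ?_
  have h₁ : (q : 𝒦) ∣ d * z := intCast_dvd_iff.mpr ⟨hre, him⟩
  have h₂ : (q : 𝒦) ∣ d * star z := by
    have := star_dvd_star_iff.mpr h₁
    rw [star_intCast, star_mul'] at this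
    exact this.trans (mul_dvd_mul_right hd _)
  obtain ⟨u, v, huv⟩ := hz
  have h₃ : (q : 𝒦) ∣ d := by
    rw [show d = u * (d * z) + v * (d * star z) by linear_combination -d * huv]
    exact dvd_add (dvd_mul_of_dvd_right h₁ _) (dvd_mul_of_dvd_right h₂ _)
  have := map_dvd QuadraticAlgebra.norm h₃
  rw [norm_intCast, sq] at this
  exact hq.not_isUnit (hsq q this)

end Kleinian

open Kleinian in
theorem exists_coprime_rep_of_forall_mod_seven {N : ℕ} (hN : N ≠ 0)
    (h : ∀ p : ℕ, p.Prime → p ∣ N → p % 7 = 1 ∨ p % 7 = 2 ∨ p % 7 = 4) :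
    ∃ a b : ℤ, IsCoprime a b ∧ a ^ 2 + a * b + 2 * b ^ 2 = N := by
  obtain ⟨z, hz, hzc⟩ := exists_norm_eq_isCoprime_star hN h
  refine ⟨z.re, z.im, by simpa using isCoprime_re_im_mul hzc (d := 1) (by simp) (by simp), ?_⟩
  rw [← norm_eq, hz]

open Kleinian in
theorem exists_coprime_rep_seven_mul {M : ℕ} (hM : M ≠ 0)
    (h : ∀ p : ℕ, p.Prime → p ∣ M → p % 7 = 1 ∨ p % 7 = 2 ∨ p % 7 = 4) :
    ∃ a b : ℤ, IsCoprime a b ∧ a ^ 2 + a * b + 2 * b ^ 2 = 7 * M := by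
  obtain ⟨z, hz, hzc⟩ := exists_norm_eq_isCoprime_star hM h
  refine ⟨(sqrtNegSeven * z).re, (sqrtNegSeven * z).im, isCoprime_re_im_mul hzc
    (by rw [star_sqrtNegSeven, neg_dvd]) (norm_sqrtNegSeven ▸ Int.prime_seven.squarefree), ?_⟩
  rw [← norm_eq, map_mul, norm_sqrtNegSeven, hz]

/-- `-2N` is primitively represented by the form with Gram matrix
`[[-2,-1],[-1,-4]]` (i.e. `a² + ab + 2b² = N` with `gcd(a,b)=1`) iff `N` is
a product of primes `≡ 1, 2, 4 mod 7`, or 7 times such a product. -/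
theorem stmt_4 (N : ℕ) (hN : 0 < N) :
    (∃ a b : ℤ, IsCoprime a b ∧ a ^ 2 + a * b + 2 * b ^ 2 = (N : ℤ)) ↔
      ((∀ p : ℕ, p.Prime → p ∣ N → (p % 7 = 1 ∨ p % 7 = 2 ∨ p % 7 = 4)) ∨
        ∃ M : ℕ, N = 7 * M ∧
          ∀ p : ℕ, p.Prime → p ∣ M → (p % 7 = 1 ∨ p % 7 = 2 ∨ p % 7 = 4)) := by
  constructor
  · rintro ⟨a, b, hab, hN'⟩
    have hsplit (p : ℕ) (hp : p.Prime) (hpN : p ∣ N) (hp7 : p ≠ 7) :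
        p % 7 = 1 ∨ p % 7 = 2 ∨ p % 7 = 4 :=
      mod_seven_of_prime_dvd hab hp hp7 (hN' ▸ Int.natCast_dvd_natCast.mpr hpN)
    have h49 : ¬49 ∣ N := fun h => not_forty_nine_dvd hab (hN' ▸ mod_cast h)
    by_cases h7 : 7 ∣ N
    · obtain ⟨M, rfl⟩ := h7
      refine Or.inr ⟨M, rfl, fun p hp hpM => hsplit p hp (dvd_mul_of_dvd_right hpM 7) ?_⟩
      rintro rfl
      exact h49 (mul_dvd_mul_left 7 hpM)
    · exact Or.inl fun p hp hpN => hsplit p hp hpN (by rintro rfl; exact h7 hpN)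
  · rintro (hsplit | ⟨M, rfl, hsplit⟩)
    · exact exists_coprime_rep_of_forall_mod_seven hN.ne' hsplit
    · push_cast
      exact exists_coprime_rep_seven_mul (by omega) hsplit
end

section
/- If there exist coprime integers a, b with a² + ab + 2b² = N, then every prime divisor p ≠ 7 of N satisfies p ≡ 1, 2, or 4 mod 7, and 49 does not divide N. -/
lemma zmod7_sq (x : ZMod 7) (hx : x ≠ 0) (hsq : IsSquare x) :
    x.val = 1 ∨ x.val = 2 ∨ x.val = 4 := by
  revert hsq hx; revert x; decide

/-- If coprime integers `a, b` satisfy `a² + ab + 2b² = N`, then every prime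
divisor `p ≠ 7` of `N` is `≡ 1, 2, 4 mod 7`, and `49 ∤ N`. -/
theorem stmt_5 (N : ℕ) (a b : ℤ) (hab : IsCoprime a b)
    (h : a ^ 2 + a * b + 2 * b ^ 2 = (N : ℤ)) :
    (∀ p : ℕ, p.Prime → p ∣ N → p ≠ 7 → (p % 7 = 1 ∨ p % 7 = 2 ∨ p % 7 = 4)) ∧
      ¬ (49 ∣ N) := by
  have key : (2 * a + b) ^ 2 + 7 * b ^ 2 = 4 * (N : ℤ) := by linear_combination 4 * h
  have hsev : Fact (Nat.Prime 7) := ⟨by norm_num⟩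
  constructor
  · intro p hp hpN hp7
    haveI : Fact p.Prime := ⟨hp⟩
    by_cases hp2 : p = 2
    · subst hp2; norm_num
    -- p is odd, p ≠ 7
    have hpNZ : (p : ℤ) ∣ (N : ℤ) := Int.natCast_dvd_natCast.mpr hpN
    have hpP : Prime (p : ℤ) := Nat.prime_iff_prime_int.mp hp
    have hpb : ¬ (p : ℤ) ∣ b := by
      intro hb
      have hu2 : (p : ℤ) ∣ (2 * a + b) ^ 2 := by
        have heq : (2 * a + b) ^ 2 = 4 * (N : ℤ) - 7 * b ^ 2 := by linarith
        rw [heq]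
        exact dvd_sub (hpNZ.mul_left 4) ((hb.pow two_ne_zero).mul_left 7)
      have hu : (p : ℤ) ∣ 2 * a + b := hpP.dvd_of_dvd_pow hu2
      have h2a : (p : ℤ) ∣ 2 * a := by
        have := dvd_sub hu hb; simpa using this
      have hpa : (p : ℤ) ∣ a := by
        rcases hpP.dvd_mul.mp h2a with h2 | ha
        · exfalso
          have h2' : p ∣ 2 := by exact_mod_cast h2
          exact hp2 ((Nat.prime_dvd_prime_iff_eq hp Nat.prime_two).mp h2')
        · exact ha
      exact hpP.not_unit (hab.isUnit_of_dvd' hpa hb)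
    -- Legendre symbol computation
    have hbz : ((b : ℤ) : ZMod p) ≠ 0 := by
      rwa [Ne, ZMod.intCast_zmod_eq_zero_iff_dvd]
    have h7z : ((-7 : ℤ) : ZMod p) ≠ 0 := by
      rw [Ne, ZMod.intCast_zmod_eq_zero_iff_dvd]
      intro hd
      have h7' : (p : ℤ) ∣ 7 := (dvd_neg.mp hd)
      have h7'' : p ∣ 7 := by exact_mod_cast h7'
      exact hp7 ((Nat.prime_dvd_prime_iff_eq hp (by norm_num)).mp h7'')
    have hxy : (((2 * a + b : ℤ) : ZMod p)) ^ 2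
        - ((-7 : ℤ) : ZMod p) * ((b : ℤ) : ZMod p) ^ 2 = 0 := by
      have h4N : (((4 * (N : ℤ)) : ℤ) : ZMod p) = 0 := by
        rw [ZMod.intCast_zmod_eq_zero_iff_dvd]
        exact hpNZ.mul_left 4
      have hk := congrArg (Int.cast : ℤ → ZMod p) key
      push_cast at hk h4N ⊢
      linear_combination hk + h4N
    have hL : legendreSym p (-7) = 1 :=
      legendreSym.eq_one_of_sq_sub_mul_sq_eq_zero h7z hbz hxy
    have hmul : legendreSym p (-7) = legendreSym p (-1) * legendreSym p 7 := by
      rw [show (-7 : ℤ) = -1 * 7 by norm_num, legendreSym.mul]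
    have hodd : p % 2 = 1 := hp.eq_two_or_odd.resolve_left hp2
    have h4 : p % 4 = 1 ∨ p % 4 = 3 := by omega
    have hc7 : ((7 : ℕ) : ℤ) = (7 : ℤ) := by norm_num
    have h7p : legendreSym 7 (p : ℤ) = 1 := by
      rcases h4 with h1 | h3
      · rw [legendreSym.quadratic_reciprocity_one_mod_four h1 (by norm_num), hc7]
        have hm1 : legendreSym p (-1) = 1 := by
          rw [legendreSym.at_neg_one hp2, ZMod.χ₄_nat_one_mod_four h1]
        rw [hmul, hm1, one_mul] at hL
        exact hL
      · rw [legendreSym.quadratic_reciprocity_three_mod_four h3 (by norm_num), hc7]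
        have hm1 : legendreSym p (-1) = -1 := by
          rw [legendreSym.at_neg_one hp2, ZMod.χ₄_nat_three_mod_four h3]
        rw [hmul, hm1, neg_one_mul, neg_eq_iff_eq_neg] at hL
        rw [hL]; norm_num
    have hpz7 : ((p : ℤ) : ZMod 7) ≠ 0 := by
      rw [Ne, ZMod.intCast_zmod_eq_zero_iff_dvd]
      intro hd
      have hd' : (7 : ℕ) ∣ p := by exact_mod_cast hd
      exact hp7 ((Nat.prime_dvd_prime_iff_eq (by norm_num) hp).mp hd').symm
    have hsq : IsSquare (((p : ℤ) : ZMod 7)) := (legendreSym.eq_one_iff 7 hpz7).mp h7p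
    have hsq' : IsSquare ((p : ZMod 7)) := by push_cast at hsq; exact hsq
    have hpz7' : ((p : ZMod 7)) ≠ 0 := by push_cast at hpz7; exact hpz7
    have := zmod7_sq (p : ZMod 7) hpz7' hsq'
    rwa [ZMod.val_natCast] at this
  · intro h49
    have h7N : (7 : ℤ) ∣ (N : ℤ) := by
      have : (49 : ℤ) ∣ (N : ℤ) := Int.natCast_dvd_natCast.mpr h49
      exact dvd_trans (by norm_num) this
    have h49N : (49 : ℤ) ∣ 4 * (N : ℤ) := (Int.natCast_dvd_natCast.mpr h49).mul_left 4
    have h7P : Prime (7 : ℤ) := Nat.prime_iff_prime_int.mp (by norm_num)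
    have hu2 : (7 : ℤ) ∣ (2 * a + b) ^ 2 := by
      have heq : (2 * a + b) ^ 2 = 4 * (N : ℤ) - 7 * b ^ 2 := by linarith
      rw [heq]
      exact dvd_sub (h7N.mul_left 4) (dvd_mul_right 7 _)
    have hu : (7 : ℤ) ∣ 2 * a + b := h7P.dvd_of_dvd_pow hu2
    obtain ⟨c, hc⟩ := hu
    have h7b2 : (49 : ℤ) ∣ 7 * b ^ 2 := by
      have heq : 7 * b ^ 2 = 4 * (N : ℤ) - 49 * c ^ 2 := by
        rw [← key, hc]; ring
      rw [heq]
      exact dvd_sub h49N (dvd_mul_right 49 _)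
    have h7b : (7 : ℤ) ∣ b := by
      obtain ⟨d, hd⟩ := h7b2
      have hb2 : b ^ 2 = 7 * d := by linarith
      exact h7P.dvd_of_dvd_pow (hb2 ▸ dvd_mul_right 7 d)
    have h7a : (7 : ℤ) ∣ a := by
      have h2a : (7 : ℤ) ∣ 2 * a := by
        have := dvd_sub (hc ▸ dvd_mul_right (7 : ℤ) c) h7b
        simpa using this
      rcases h7P.dvd_mul.mp h2a with h2 | ha
      · norm_num at h2
      · exact ha
    exact h7P.not_unit (hab.isUnit_of_dvd' h7a h7b)
end

section
/- A prime p ≠ 3, 5 is represented by the form 2x² + xy + 2y² if and only if p ≡ 2 or 8 mod 15. -/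
-- Lemma A: from s²+15t²=8n with s,t odd, get a representation by 2x²+xy+2y²
lemma repA (n s t : ℤ) (h : s^2 + 15*t^2 = 8*n) (hs : s % 2 = 1) (ht : t % 2 = 1) :
    ∃ a b : ℤ, 2*a^2 + a*b + 2*b^2 = n := by
  have h4 : (s - t) % 4 = 0 ∨ (s - t) % 4 = 2 := by omega
  rcases h4 with h4 | h4
  · obtain ⟨a, ha⟩ : (4:ℤ) ∣ (s - t) := by omega
    refine ⟨a, t, ?_⟩
    have key : 8*(2*a^2 + a*t + 2*t^2) = 8*n := by linear_combination h - (s + 4*a + t) * ha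
    linarith
  · obtain ⟨a, ha⟩ : (4:ℤ) ∣ (s + t) := by omega
    refine ⟨a, -t, ?_⟩
    have key : 8*(2*a^2 + a*(-t) + 2*(-t)^2) = 8*n := by
      linear_combination h - (s + 4*a - t) * ha
    linarith

-- mod-15 lemmas
lemma zmod15_principal : ∀ x y : ZMod 15, IsUnit (x^2+x*y+4*y^2) →
    x^2+x*y+4*y^2 = 1 ∨ x^2+x*y+4*y^2 = 4 := by decide

lemma zmod15_nonprincipal : ∀ x y : ZMod 15, IsUnit (2*x^2+x*y+2*y^2) →
    2*x^2+x*y+2*y^2 = 2 ∨ 2*x^2+x*y+2*y^2 = 8 := by decide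

lemma coprime15 (p : ℕ) (hp3 : ¬ (3 ∣ p)) (hp5 : ¬ (5 ∣ p)) : Nat.Coprime p 15 := by
  have c3 : Nat.Coprime 3 p := (Nat.Prime.coprime_iff_not_dvd (by norm_num)).mpr hp3
  have c5 : Nat.Coprime 5 p := (Nat.Prime.coprime_iff_not_dvd (by norm_num)).mpr hp5
  have : Nat.Coprime 15 p := Nat.Coprime.mul c3 c5
  exact this.symm

lemma mod15_of_cast {p : ℕ} {c : ℕ} (hc : c < 15) (h : (p : ZMod 15) = (c : ZMod 15)) :
    p % 15 = c := by
  have := congrArg ZMod.val h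
  rwa [ZMod.val_natCast, ZMod.val_natCast, Nat.mod_eq_of_lt hc] at this

lemma principalMod (p : ℕ) (hp3 : ¬ (3 ∣ p)) (hp5 : ¬ (5 ∣ p)) (u v : ℤ)
    (h : u^2 + u*v + 4*v^2 = (p:ℤ)) : p % 15 = 1 ∨ p % 15 = 4 := by
  have hz : ((u : ZMod 15))^2 + (u:ZMod 15)*(v:ZMod 15) + 4*(v:ZMod 15)^2 = (p : ZMod 15) := by
    have := congrArg (fun x : ℤ => (x : ZMod 15)) h
    push_cast at this
    exact this
  have hu : IsUnit ((p:ℕ) : ZMod 15) := (ZMod.isUnit_iff_coprime p 15).mpr (coprime15 p hp3 hp5)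
  rw [← hz] at hu
  rcases zmod15_principal _ _ hu with h1 | h1 <;> rw [hz] at h1
  · exact Or.inl (mod15_of_cast (by norm_num) (by exact_mod_cast h1))
  · exact Or.inr (mod15_of_cast (by norm_num) (by exact_mod_cast h1))

lemma nonprincipalMod (p : ℕ) (hp3 : ¬ (3 ∣ p)) (hp5 : ¬ (5 ∣ p)) (u v : ℤ)
    (h : 2*u^2 + u*v + 2*v^2 = (p:ℤ)) : p % 15 = 2 ∨ p % 15 = 8 := by
  have hz : 2*((u : ZMod 15))^2 + (u:ZMod 15)*(v:ZMod 15) + 2*(v:ZMod 15)^2 = (p : ZMod 15) := by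
    have := congrArg (fun x : ℤ => (x : ZMod 15)) h
    push_cast at this
    exact this
  have hu : IsUnit ((p:ℕ) : ZMod 15) := (ZMod.isUnit_iff_coprime p 15).mpr (coprime15 p hp3 hp5)
  rw [← hz] at hu
  rcases zmod15_nonprincipal _ _ hu with h1 | h1 <;> rw [hz] at h1
  · exact Or.inl (mod15_of_cast (by norm_num) (by exact_mod_cast h1))
  · exact Or.inr (mod15_of_cast (by norm_num) (by exact_mod_cast h1))

set_option maxHeartbeats 1000000 in
lemma thue_core (p : ℕ) (hp : p.Prime) (h2 : p ≠ 2)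
    (hsq : IsSquare (-15 : ZMod p)) :
    ∃ a b : ℤ, (p:ℤ) ∣ (2*a^2 + a*b + 2*b^2) ∧ 0 < 2*a^2 + a*b + 2*b^2 ∧
      2*a^2 + a*b + 2*b^2 < 5*p := by
  haveI : Fact p.Prime := ⟨hp⟩
  obtain ⟨s, hs⟩ := hsq
  -- build root r of 2r²+r+2 = 0 in ZMod p
  have hch2 : (2 : ZMod p) ≠ 0 := by
    have : ((2:ℕ) : ZMod p) ≠ 0 := by
      rw [Ne, ZMod.natCast_eq_zero_iff]
      intro hd
      exact h2 ((Nat.prime_dvd_prime_iff_eq hp Nat.prime_two).mp hd)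
    exact_mod_cast this
  have h4 : (4 : ZMod p) ≠ 0 := by
    have : (4 : ZMod p) = 2 * 2 := by norm_num
    rw [this]; exact mul_ne_zero hch2 hch2
  have h8 : (8 : ZMod p) ≠ 0 := by
    have : (8 : ZMod p) = 2 * 4 := by norm_num
    rw [this]; exact mul_ne_zero hch2 h4
  set r : ZMod p := (s - 1) * (4 : ZMod p)⁻¹ with hrdef
  have h4r : 4 * r = s - 1 := by
    rw [hrdef, mul_comm (s-1), ← mul_assoc, mul_inv_cancel₀ h4, one_mul]
  have hr : 2*r^2 + r + 2 = 0 := by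
    have key : 8*(2*r^2 + r + 2) = (4*r+1)^2 + 15 := by ring
    rw [h4r] at key
    have key2 : (s - 1 + 1)^2 + 15 = 0 := by
      have : s^2 + 15 = 0 := by rw [sq]; rw [← hs]; ring
      calc (s - 1 + 1)^2 + 15 = s^2 + 15 := by ring
        _ = 0 := this
    rw [key2] at key
    exact (mul_eq_zero.mp key).resolve_left h8
  -- pigeonhole
  set m := Nat.sqrt p with hm
  have hcard : Fintype.card (ZMod p) < Fintype.card (Fin (m+1) × Fin (m+1)) := by
    rw [ZMod.card, Fintype.card_prod, Fintype.card_fin]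
    exact Nat.lt_succ_sqrt p
  obtain ⟨t, u, htu, heq⟩ := Fintype.exists_ne_map_eq_of_card_lt
    (fun x : Fin (m+1) × Fin (m+1) => ((x.1 : ℕ) : ZMod p) - r * ((x.2 : ℕ) : ZMod p)) hcard
  set a : ℤ := ((t.1 : ℕ) : ℤ) - ((u.1 : ℕ) : ℤ) with hadef
  set b : ℤ := ((t.2 : ℕ) : ℤ) - ((u.2 : ℕ) : ℤ) with hbdef
  clear_value a b
  have hab : ¬ (a = 0 ∧ b = 0) := by
    rintro ⟨ha0, hb0⟩
    apply htu
    have e1 : (t.1 : ℕ) = (u.1 : ℕ) := by omega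
    have e2 : (t.2 : ℕ) = (u.2 : ℕ) := by omega
    exact Prod.ext (Fin.ext e1) (Fin.ext e2)
  have hcong : ((a : ℤ) : ZMod p) = r * ((b : ℤ) : ZMod p) := by
    simp only [hadef, hbdef]
    push_cast
    linear_combination heq
  have hdvd : (p:ℤ) ∣ (2*a^2 + a*b + 2*b^2) := by
    rw [← ZMod.intCast_zmod_eq_zero_iff_dvd]
    push_cast
    rw [hcong]
    linear_combination ((b:ℤ) : ZMod p)^2 * hr
  -- bounds
  have hma : a^2 ≤ (m:ℤ)^2 := by
    have h1 : ((t.1 : ℕ) : ℤ) ≤ m := by exact_mod_cast Nat.lt_succ_iff.mp t.1.isLt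
    have h2 : ((u.1 : ℕ) : ℤ) ≤ m := by exact_mod_cast Nat.lt_succ_iff.mp u.1.isLt
    have h3 : (0:ℤ) ≤ ((t.1 : ℕ) : ℤ) := Int.natCast_nonneg _
    have h4 : (0:ℤ) ≤ ((u.1 : ℕ) : ℤ) := Int.natCast_nonneg _
    nlinarith [sq_nonneg a]
  have hmb : b^2 ≤ (m:ℤ)^2 := by
    have h1 : ((t.2 : ℕ) : ℤ) ≤ m := by exact_mod_cast Nat.lt_succ_iff.mp t.2.isLt
    have h2 : ((u.2 : ℕ) : ℤ) ≤ m := by exact_mod_cast Nat.lt_succ_iff.mp u.2.isLt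
    have h3 : (0:ℤ) ≤ ((t.2 : ℕ) : ℤ) := Int.natCast_nonneg _
    have h4 : (0:ℤ) ≤ ((u.2 : ℕ) : ℤ) := Int.natCast_nonneg _
    nlinarith [sq_nonneg b]
  have hmp : (m:ℤ)^2 ≤ (p:ℤ) := by
    have := Nat.sqrt_le' p
    rw [hm]
    exact_mod_cast (by nlinarith [Nat.sqrt_le' p] : (Nat.sqrt p)^2 ≤ p)
  -- squares can't equal p
  have hnotsq : ∀ x : ℤ, x^2 ≠ (p:ℤ) := by
    intro x hx
    have hx' : x.natAbs ^ 2 = p := by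
      have := congrArg Int.natAbs hx
      rw [Int.natAbs_pow] at this; simpa using this
    have hd : x.natAbs ∣ p := ⟨x.natAbs, by rw [← hx']; ring⟩
    rcases (Nat.Prime.eq_one_or_self_of_dvd hp _ hd) with h1 | h1
    · rw [h1] at hx'; simp at hx'; exact hp.one_lt.ne' hx'.symm
    · rw [h1] at hx'
      nlinarith [hp.two_le]
  have hap : a^2 ≤ (p:ℤ) - 1 := by
    have h1 : a^2 ≤ (p:ℤ) := le_trans hma hmp
    have h2 : a^2 < (p:ℤ) := lt_of_le_of_ne h1 (hnotsq a)
    linarith [Int.add_one_le_iff.mpr h2]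
  have hbp : b^2 ≤ (p:ℤ) - 1 := by
    have h1 : b^2 ≤ (p:ℤ) := le_trans hmb hmp
    have h2 : b^2 < (p:ℤ) := lt_of_le_of_ne h1 (hnotsq b)
    linarith [Int.add_one_le_iff.mpr h2]
  have hpos : 0 < 2*a^2 + a*b + 2*b^2 := by
    rcases eq_or_ne b 0 with hb | hb
    · have ha : a ≠ 0 := fun h => hab ⟨h, hb⟩
      have : 0 < a^2 := by positivity
      rw [hb]; nlinarith
    · have hb1 : 1 ≤ b^2 := by
        have h0 : 0 < b^2 := by positivity
        linarith [Int.add_one_le_iff.mpr h0]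
      nlinarith [sq_nonneg (4*a+b)]
  have hub : 2*a^2 + a*b + 2*b^2 < 5*(p:ℤ) := by
    have hp2 : (2:ℤ) ≤ p := by exact_mod_cast hp.two_le
    have habl : a*b ≤ (p:ℤ) - 1 := by nlinarith [sq_nonneg (a-b)]
    linarith
  exact ⟨a, b, hdvd, hpos, hub⟩

lemma zmod3_lemma : ∀ x y : ZMod 3, 2*x^2 + x*y + 2*y^2 = 0 → x + y = 0 := by decide

lemma odd_aux (b x q : ℤ) (h : b^2 + b*x + 4*x^2 = 2*q) (hb : b % 2 = 1) : x % 2 = 1 := by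
  rcases Int.even_or_odd x with ⟨z, hz⟩ | ⟨z, hz⟩
  · exfalso
    obtain ⟨w, hw⟩ : ∃ w, b = 2*w + 1 := ⟨b/2, by omega⟩
    have key : b^2 + b*x + 4*x^2 = 2*(2*w^2 + 2*w + 2*w*z + z + 8*z^2) + 1 := by
      rw [hw, hz]; ring
    rw [key] at h
    omega
  · omega

lemma sqrt_neg15 (p : ℕ) (hp : p.Prime) (h2 : p ≠ 2)
    (hmod : p % 15 = 2 ∨ p % 15 = 8) : IsSquare (-15 : ZMod p) := by
  haveI : Fact p.Prime := ⟨hp⟩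
  have hodd : Odd p := hp.odd_of_ne_two h2
  have hne0 : ((-15 : ℤ) : ZMod p) ≠ 0 := by
    rw [Ne, ZMod.intCast_zmod_eq_zero_iff_dvd, dvd_neg]
    intro hd
    have hd' : p ∣ 15 := by exact_mod_cast hd
    have := Nat.le_of_dvd (by norm_num) hd'
    interval_cases p <;> revert hd' <;> revert hmod <;> decide
  have key : legendreSym p (-15) = 1 := by
    rw [jacobiSym.legendreSym.to_jacobiSym, jacobiSym.mod_right (-15) hodd]
    have h60 : (4 * ((-15:ℤ).natAbs)) = 60 := by norm_num
    rw [h60]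
    have hcase : p % 60 = 17 ∨ p % 60 = 47 ∨ p % 60 = 23 ∨ p % 60 = 53 := by
      have hp2 : p % 2 = 1 := Nat.odd_iff.mp hodd
      omega
    rcases hcase with h | h | h | h <;> rw [h] <;> norm_num
  have := (legendreSym.eq_one_iff p hne0).mp key
  have e : (((-15 : ℤ)) : ZMod p) = (-15 : ZMod p) := by push_cast; ring
  rwa [e] at this

/-- A prime `p ≠ 3, 5` is represented by `2x² + xy + 2y²` iff
`p ≡ 2, 8 mod 15`. -/
theorem stmt_10 (p : ℕ) (hp : p.Prime) (h3 : p ≠ 3) (h5 : p ≠ 5) :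
    (∃ a b : ℤ, 2 * a ^ 2 + a * b + 2 * b ^ 2 = (p : ℤ)) ↔
      (p % 15 = 2 ∨ p % 15 = 8) := by
  have hp3 : ¬ (3 ∣ p) := fun hd => h3 ((Nat.prime_dvd_prime_iff_eq (by norm_num) hp).mp hd).symm
  have hp5 : ¬ (5 ∣ p) := fun hd => h5 ((Nat.prime_dvd_prime_iff_eq (by norm_num) hp).mp hd).symm
  constructor
  · rintro ⟨a, b, h⟩
    exact nonprincipalMod p hp3 hp5 a b (by linarith)
  · intro hmod
    by_cases hp2 : p = 2
    · exact ⟨1, 0, by rw [hp2]; norm_num⟩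
    obtain ⟨a, b, hdvd, hpos, hub⟩ := thue_core p hp hp2 (sqrt_neg15 p hp hp2 hmod)
    obtain ⟨k, hk⟩ := hdvd
    have hp0 : (0:ℤ) < p := by exact_mod_cast hp.pos
    have hk1 : 1 ≤ k := by nlinarith
    have hk4 : k ≤ 4 := by nlinarith
    interval_cases k
    · exact ⟨a, b, by linarith⟩
    · -- k = 2
      exfalso
      have h2ab : (2:ℤ) ∣ a*b := ⟨(p:ℤ) - a^2 - b^2, by linarith⟩
      rcases Int.prime_two.2.2 a b h2ab with ⟨c, hc⟩ | ⟨c, hc⟩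
      · have key : 2*(b^2 + b*c + 4*c^2) = 2*(p:ℤ) := by
          linear_combination hk + (-2*a - b - 4*c) * hc
        have hrep : b^2 + b*c + 4*c^2 = (p:ℤ) := by linarith
        rcases principalMod p hp3 hp5 b c hrep with h | h <;> omega
      · have key : 2*(a^2 + a*c + 4*c^2) = 2*(p:ℤ) := by
          linear_combination hk + (-2*b - a - 4*c) * hc
        have hrep : a^2 + a*c + 4*c^2 = (p:ℤ) := by linarith
        rcases principalMod p hp3 hp5 a c hrep with h | h <;> omega
    · -- k = 3
      exfalso
      have hcast : 2*((a:ℤ) : ZMod 3)^2 + ((a:ℤ) : ZMod 3)*((b:ℤ) : ZMod 3)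
          + 2*((b:ℤ) : ZMod 3)^2 = 0 := by
        have hc := congrArg (fun x : ℤ => (x : ZMod 3)) hk
        push_cast at hc
        rw [hc, show (3 : ZMod 3) = 0 by decide, mul_zero]
      have hz := zmod3_lemma _ _ hcast
      have hdvd3 : (3:ℤ) ∣ a + b := by
        have hz' : ((a + b : ℤ) : ZMod 3) = 0 := by push_cast; exact hz
        exact_mod_cast (ZMod.intCast_zmod_eq_zero_iff_dvd (a + b) 3).mp hz'
      obtain ⟨c, hc⟩ := hdvd3
      have key : 3*((b - c)^2 + (b - c)*(-c) + 4*(-c)^2) = 3*(p:ℤ) := by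
        linear_combination hk + (-2*a + b - 6*c) * hc
      have hrep : (b - c)^2 + (b - c)*(-c) + 4*(-c)^2 = (p:ℤ) := by linarith
      rcases principalMod p hp3 hp5 (b - c) (-c) hrep with h | h <;> omega
    · -- k = 4
      rcases Int.even_or_odd a with ⟨x, hx⟩ | ⟨x, hx⟩ <;>
        rcases Int.even_or_odd b with ⟨y, hy⟩ | ⟨y, hy⟩
      · -- both even
        refine ⟨x, y, ?_⟩
        rw [hx, hy] at hk
        have key : 4*(2*x^2 + x*y + 2*y^2) = 4*(p:ℤ) := by linear_combination hk
        linarith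
      · -- a even, b odd
        have hc : a = 2*x := by omega
        have key : 2*(b^2 + b*x + 4*x^2) = 4*(p:ℤ) := by
          linear_combination hk + (-2*a - b - 4*x) * hc
        have hupv : b^2 + b*x + 4*x^2 = 2*(p:ℤ) := by linarith
        have hbodd : b % 2 = 1 := by omega
        have hxodd : x % 2 = 1 := odd_aux b x (p:ℤ) hupv hbodd
        have key2 : (2*b + x)^2 + 15*x^2 = 8*(p:ℤ) := by linear_combination 4*hupv
        exact repA (p:ℤ) (2*b + x) x key2 (by omega) hxodd
      · -- a odd, b even
        have hc : b = 2*y := by omega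
        have key : 2*(a^2 + a*y + 4*y^2) = 4*(p:ℤ) := by
          linear_combination hk + (-2*b - a - 4*y) * hc
        have hupv : a^2 + a*y + 4*y^2 = 2*(p:ℤ) := by linarith
        have haodd : a % 2 = 1 := by omega
        have hyodd : y % 2 = 1 := odd_aux a y (p:ℤ) hupv haodd
        have key2 : (2*a + y)^2 + 15*y^2 = 8*(p:ℤ) := by linear_combination 4*hupv
        exact repA (p:ℤ) (2*a + y) y key2 (by omega) hyodd
      · -- both odd : impossible
        exfalso
        have key : 2*a^2 + a*b + 2*b^2 = 2*(a^2 + b^2 + 2*x*y + x + y) + 1 := by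
          rw [hx, hy]; ring
        rw [key] at hk
        obtain ⟨A, hA⟩ : ∃ A : ℤ, a^2 + b^2 + 2*x*y + x + y = A := ⟨_, rfl⟩
        rw [hA] at hk
        omega
end

section
/- A prime p ≠ 3, 5 is represented by the form x² + xy + 4y² if and only if p ≡ 1 or 4 mod 15. -/
/-!
If `p = x² + xy + 4y²` then `16p ≡ (4x + 2y)² (mod 15)`, so `p` is a square unit mod 15, i.e.
`p ≡ 1, 4`. Conversely, for such `p` the Jacobi symbol `(-15 | p)` is `1`, so `r² + r + 4` has a
root `r` mod `p`. Thue's lemma gives `(x, y) ≠ 0` with `x² , y² < p` and `x ≡ r y`, hence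
`x² + xy + 4y² = k p` with `0 < k < 6`. The form only takes square values mod 15, which forces
`k ∈ {1, 4}`, and a representation of `4p` descends to one of `p` by a case analysis mod 4.
-/

theorem ZMod.exists_abs_le_sqrt_intCast_eq_mul (n : ℕ) [NeZero n] (r : ZMod n) :
    ∃ x y : ℤ, (x, y) ≠ 0 ∧ |x| ≤ n.sqrt ∧ |y| ≤ n.sqrt ∧ (x : ZMod n) = r * y := by
  have hcard : Fintype.card (ZMod n) < Fintype.card (Fin (n.sqrt + 1) × Fin (n.sqrt + 1)) := by
    simpa [ZMod.card, ← sq] using Nat.lt_succ_sqrt' n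
  obtain ⟨a, b, hne, hab⟩ := Fintype.exists_ne_map_eq_of_card_lt
    (fun q ↦ ((q.1 : ℕ) : ZMod n) - r * ((q.2 : ℕ) : ZMod n)) hcard
  have := a.1.isLt; have := a.2.isLt; have := b.1.isLt; have := b.2.isLt
  refine ⟨(a.1 : ℤ) - b.1, (a.2 : ℤ) - b.2, fun h ↦ hne ?_, ?_, ?_, ?_⟩
  · simp only [Prod.mk_eq_zero, sub_eq_zero, Nat.cast_inj, Fin.val_inj] at h
    exact Prod.ext h.1 h.2
  · exact abs_sub_le_iff.2 ⟨by omega, by omega⟩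
  · exact abs_sub_le_iff.2 ⟨by omega, by omega⟩
  · push_cast
    linear_combination hab

theorem Nat.Prime.exists_sq_lt_intCast_eq_mul {p : ℕ} (hp : p.Prime) (r : ZMod p) :
    ∃ x y : ℤ, (x, y) ≠ 0 ∧ x ^ 2 < p ∧ y ^ 2 < p ∧ (x : ZMod p) = r * y := by
  have : NeZero p := ⟨hp.ne_zero⟩
  have hsqrt : ((p.sqrt ^ 2 : ℕ) : ℤ) < p := by
    refine Nat.cast_lt.2 ((Nat.sqrt_le' p).lt_of_ne fun h ↦ hp.prime.not_isSquare ?_)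
    exact ⟨p.sqrt, by rw [← sq, h]⟩
  have hsq {z : ℤ} (hz : |z| ≤ p.sqrt) : z ^ 2 < p := by
    rw [← sq_abs]; push_cast at hsqrt
    exact (pow_le_pow_left₀ (abs_nonneg z) hz 2).trans_lt hsqrt
  obtain ⟨x, y, hne, hx, hy, hxy⟩ := ZMod.exists_abs_le_sqrt_intCast_eq_mul p r
  exact ⟨x, y, hne, hsq hx, hsq hy, hxy⟩

theorem Int.four_dvd_or_of_four_dvd_mul {a b : ℤ} (h : 4 ∣ a * b) :
    4 ∣ a ∨ 4 ∣ b ∨ 2 ∣ a ∧ 2 ∣ b := by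
  have hmod : a % 4 * (b % 4) % 4 = 0 := by rw [← Int.mul_emod]; omega
  have ha : 0 ≤ a % 4 := by omega
  have ha' : a % 4 < 4 := by omega
  have hb : 0 ≤ b % 4 := by omega
  have hb' : b % 4 < 4 := by omega
  interval_cases hra : a % 4 <;> interval_cases hrb : b % 4 <;> omega

theorem Nat.mod_fifteen_eq_one_or_four_of_isSquare {n : ℕ} (hsq : IsSquare (n : ZMod 15))
    (h3 : ¬ 3 ∣ n) (h5 : ¬ 5 ∣ n) : n % 15 = 1 ∨ n % 15 = 4 := by
  have key : ∀ r : ℕ, r < 15 → IsSquare (r : ZMod 15) → ¬ 3 ∣ r → ¬ 5 ∣ r →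
      r = 1 ∨ r = 4 := by
    decide
  rw [← ZMod.natCast_mod] at hsq
  exact key _ (Nat.mod_lt _ (by norm_num)) hsq (by omega) (by omega)

namespace PrincipalForm15

theorem form_pos {x y : ℤ} (h : (x, y) ≠ 0) : 0 < x ^ 2 + x * y + 4 * y ^ 2 := by
  rcases eq_or_ne y 0 with rfl | hy
  · have hx : x ≠ 0 := by rintro rfl; exact h rfl
    have : 0 < x ^ 2 := by positivity
    simpa using this
  · have : 0 < y ^ 2 := by positivity
    nlinarith [sq_nonneg (2 * x + y)]

theorem form_lt_six_mul {x y n : ℤ} (hx : x ^ 2 < n) (hy : y ^ 2 < n) :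
    x ^ 2 + x * y + 4 * y ^ 2 < 6 * n := by
  nlinarith [sq_nonneg (x + y), sq_nonneg (x - y)]

-- `16 (x² + xy + 4y²) = (4x + 2y)² + 60y²` and `16 ≡ 1 (mod 15)`.
theorem isSquare_intCast_form (x y : ℤ) :
    IsSquare ((x ^ 2 + x * y + 4 * y ^ 2 : ℤ) : ZMod 15) := by
  have h15 : (15 : ZMod 15) = 0 := rfl
  refine ⟨4 * x + 2 * y, ?_⟩
  push_cast
  linear_combination (4 * (y : ZMod 15) ^ 2 - (x ^ 2 + x * y + 4 * y ^ 2)) * h15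

theorem exists_form_eq_of_eq_four_mul {x y n : ℤ} (h : x ^ 2 + x * y + 4 * y ^ 2 = 4 * n) :
    ∃ a b : ℤ, a ^ 2 + a * b + 4 * b ^ 2 = n := by
  -- `x² + xy + 4y² ≡ x (x + y) (mod 4)`
  have hdvd : 4 ∣ x * (x + y) := ⟨n - y ^ 2, by linear_combination h⟩
  rcases Int.four_dvd_or_of_four_dvd_mul hdvd with
    ⟨c, rfl⟩ | ⟨c, hc⟩ | ⟨⟨u, rfl⟩, ⟨v, hv⟩⟩
  · exact ⟨y, c, mul_left_cancel₀ four_ne_zero (by linear_combination h)⟩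
  · exact ⟨-y, c, mul_left_cancel₀ four_ne_zero (by linear_combination h - (4 * c + x) * hc)⟩
  · refine ⟨u, v - u, mul_left_cancel₀ four_ne_zero ?_⟩
    linear_combination h - (8 * v - 6 * u + 4 * y) * hv

theorem eq_one_or_four_of_form_eq_mul {x y k : ℤ} {n : ℕ} (hn : n % 15 = 1 ∨ n % 15 = 4)
    (hk₀ : 0 < k) (hk₆ : k < 6) (h : x ^ 2 + x * y + 4 * y ^ 2 = k * n) : k = 1 ∨ k = 4 := by
  -- the squares mod 15 are `0, 1, 4, 6, 9, 10`, a set stable under multiplication by `1` and `4`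
  have hsq := isSquare_intCast_form x y
  rw [h, Int.cast_mul, Int.cast_natCast, ← ZMod.natCast_mod] at hsq
  interval_cases k <;> rcases hn with hn | hn <;> rw [hn] at hsq <;> revert hsq <;> decide

theorem exists_root_of_mod_fifteen {p : ℕ} [Fact p.Prime] (hp : p % 15 = 1 ∨ p % 15 = 4) :
    ∃ r : ZMod p, r * r + r + 4 = 0 := by
  have hp2 : p ≠ 2 := by omega
  have hodd : Odd p := (Fact.out : p.Prime).odd_of_ne_two hp2
  have hJ : jacobiSym (-15) p = 1 := by
    have : p % 60 = 1 ∨ p % 60 = 19 ∨ p % 60 = 31 ∨ p % 60 = 49 := by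
      have := Nat.odd_iff.1 hodd; omega
    rw [jacobiSym.mod_right _ hodd]
    rcases this with h | h | h | h <;> norm_num [h]
  have h2 : ((2 : ℕ) : ZMod p) ≠ 0 := by
    rw [Ne, ZMod.natCast_eq_zero_iff]
    exact fun h ↦ hp2 ((Nat.prime_dvd_prime_iff_eq Fact.out Nat.prime_two).1 h)
  have : NeZero (2 : ZMod p) := ⟨by exact_mod_cast h2⟩
  obtain ⟨s, hs⟩ := ZMod.isSquare_of_jacobiSym_eq_one hJ
  simpa using exists_quadratic_eq_zero (one_ne_zero (α := ZMod p)) (b := 1) (c := 4)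
    ⟨s, by rw [discrim]; push_cast at hs; linear_combination hs⟩

theorem exists_form_eq_of_root {p : ℕ} (hp : p.Prime) (h15 : p % 15 = 1 ∨ p % 15 = 4)
    {r : ZMod p} (hr : r * r + r + 4 = 0) : ∃ a b : ℤ, a ^ 2 + a * b + 4 * b ^ 2 = p := by
  obtain ⟨x, y, hne, hx, hy, hxy⟩ := hp.exists_sq_lt_intCast_eq_mul r
  obtain ⟨k, hk⟩ : (p : ℤ) ∣ x ^ 2 + x * y + 4 * y ^ 2 := by
    rw [← ZMod.intCast_zmod_eq_zero_iff_dvd]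
    push_cast
    rw [hxy]
    linear_combination (y : ZMod p) ^ 2 * hr
  have hp₀ : (0 : ℤ) < p := by exact_mod_cast hp.pos
  have hk₀ : 0 < k := pos_of_mul_pos_right (hk ▸ form_pos hne) hp₀.le
  have hk₆ : k < 6 := by nlinarith [form_lt_six_mul hx hy]
  rw [mul_comm (p : ℤ)] at hk
  rcases eq_one_or_four_of_form_eq_mul h15 hk₀ hk₆ hk with rfl | rfl
  · exact ⟨x, y, by rw [hk, one_mul]⟩
  · exact exists_form_eq_of_eq_four_mul hk

end PrincipalForm15

open PrincipalForm15

/-- A prime `p ≠ 3, 5` is represented by `x² + xy + 4y²` iff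
`p ≡ 1, 4 mod 15`. -/
theorem stmt_11 (p : ℕ) (hp : p.Prime) (h3 : p ≠ 3) (h5 : p ≠ 5) :
    (∃ a b : ℤ, a ^ 2 + a * b + 4 * b ^ 2 = (p : ℤ)) ↔
      (p % 15 = 1 ∨ p % 15 = 4) := by
  constructor
  · rintro ⟨a, b, hab⟩
    have hsq := isSquare_intCast_form a b
    rw [hab, Int.cast_natCast] at hsq
    exact Nat.mod_fifteen_eq_one_or_four_of_isSquare hsq
      (fun h ↦ h3 ((Nat.prime_dvd_prime_iff_eq Nat.prime_three hp).1 h).symm)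
      (fun h ↦ h5 ((Nat.prime_dvd_prime_iff_eq Nat.prime_five hp).1 h).symm)
  · intro h15
    have := Fact.mk hp
    obtain ⟨r, hr⟩ := exists_root_of_mod_fifteen h15
    exact exists_form_eq_of_root hp h15 hr
end
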